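/- Let ℓ, m ≥ 1 and let G be a finite simple graph that contains no complete bipartite subgraph K_{ℓ,m}. Then every strictly increasing chain A_1 ⊂ A_2 ⊂ ⋯ ⊂ A_p of nonempty subsets of V such that CN(A_p) ≠ ∅ and CN²(A_i) = A_i for all 1 ≤ i ≤ p has length p ≤ ℓ + m − 2. (Equivalently: the dimension of the Lovász complex L(G), whose (p−1)-simplices are exactly such chains of length p, is at most ℓ + m − 3.) -/

import Mathlib

/-! `A ↦ CN(A)` is an antitone Galois connection of `Set V` with itself, so it is injective on
closed sets (`CN² A = A`) and turns the chain `A 0 ⊂ ⋯ ⊂ A (p-1)` into a strictly decreasing chain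
`CN(A 0) ⊃ ⋯ ⊃ CN(A (p-1)) ≠ ∅`. Counting, `|A i| ≥ i + 1` and `|CN(A i)| ≥ p - i`; at `i = ℓ - 1`
the sets `A i` and `CN(A i)`, disjoint because `G` is loopless, carry a `K_{ℓ,m}` as soon as
`p ≥ ℓ + m - 1`. -/

/-- The common neighborhood of a set `A` of vertices of a graph `G`:
all vertices adjacent to every element of `A`. Note `commonNbhd G ∅ = Set.univ`. -/
def commonNbhd {V : Type*} (G : SimpleGraph V) (A : Set V) : Set V :=
  {v | ∀ a ∈ A, G.Adj a v}

/-- `G` contains a complete bipartite subgraph `K_{ℓ,m}`: there are disjoint vertex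
sets of sizes `ℓ` and `m` with all edges between them present. -/
def ContainsKB {V : Type*} (G : SimpleGraph V) (ℓ m : ℕ) : Prop :=
  ∃ S T : Set V, Disjoint S T ∧ S.ncard = ℓ ∧ T.ncard = m ∧
    ∀ s ∈ S, ∀ t ∈ T, G.Adj s t

theorem Fin.add_sub_le_of_strictMono {p : ℕ} {g : Fin p → ℕ} (hg : StrictMono g) {i j : Fin p}
    (hij : i ≤ j) : g i + (j - i : ℕ) ≤ g j := by
  have hcard := Finset.card_le_card_of_injOn g
    (s := Finset.Icc i j) (t := Finset.Icc (g i) (g j))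
    (fun k hk => by
      simp only [Finset.coe_Icc, Set.mem_Icc] at hk ⊢
      exact ⟨hg.monotone hk.1, hg.monotone hk.2⟩)
    hg.injective.injOn
  rw [Fin.card_Icc, Nat.card_Icc] at hcard
  have := hg.monotone hij
  omega

theorem Fin.add_sub_le_of_strictAnti {p : ℕ} {g : Fin p → ℕ} (hg : StrictAnti g) {i j : Fin p}
    (hij : i ≤ j) : g j + (j - i : ℕ) ≤ g i := by
  have := Fin.add_sub_le_of_strictMono (hg.comp Fin.rev_strictAnti)
    (Fin.rev_le_rev.mpr hij)
  simp only [Function.comp_apply, Fin.rev_rev, Fin.val_rev] at this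
  omega

namespace SimpleGraph

variable {V : Type*} (G : SimpleGraph V) {A B : Set V}

theorem commonNbhd_anti (h : A ⊆ B) : commonNbhd G B ⊆ commonNbhd G A :=
  fun _ hv a ha => hv a (h ha)

theorem subset_commonNbhd_commonNbhd (A : Set V) : A ⊆ commonNbhd G (commonNbhd G A) :=
  fun a ha _ hv => (hv a ha).symm

theorem disjoint_commonNbhd (A : Set V) : Disjoint A (commonNbhd G A) :=
  Set.disjoint_left.mpr fun a ha hcn => G.loopless.irrefl a (hcn a ha)

theorem commonNbhd_ssubset_commonNbhd (hAB : A ⊂ B) (hA : commonNbhd G (commonNbhd G A) = A) :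
    commonNbhd G B ⊂ commonNbhd G A := by
  refine (commonNbhd_anti G hAB.subset).ssubset_of_ne fun h => hAB.not_subset ?_
  calc B ⊆ commonNbhd G (commonNbhd G B) := subset_commonNbhd_commonNbhd G B
    _ = A := by rw [h, hA]

theorem strictAnti_commonNbhd_comp {ι : Type*} [Preorder ι] {A : ι → Set V} (hA : StrictMono A)
    (hfix : ∀ i, commonNbhd G (commonNbhd G (A i)) = A i) :
    StrictAnti fun i => commonNbhd G (A i) :=
  fun _ _ hij => commonNbhd_ssubset_commonNbhd G (hA hij) (hfix _)

theorem containsKB_of_le_ncard {ℓ m : ℕ} {S : Set V} (hS : ℓ ≤ S.ncard)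
    (hT : m ≤ (commonNbhd G S).ncard) : ContainsKB G ℓ m := by
  obtain ⟨S', hS'S, hS'card⟩ := Set.exists_subset_card_eq hS
  obtain ⟨T, hTS, hTcard⟩ := Set.exists_subset_card_eq hT
  exact ⟨S', T, (disjoint_commonNbhd G S).mono hS'S hTS, hS'card, hTcard,
    fun s hs t ht => hTS ht s (hS'S hs)⟩

end SimpleGraph

/-- If `G` contains no `K_{ℓ,m}`, then any strictly increasing chain
`A 0 ⊂ A 1 ⊂ ⋯ ⊂ A (p-1)` of nonempty subsets of `V` with `CN(A (p-1)) ≠ ∅`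
and `CN²(A i) = A i` for all `i` has length `p ≤ ℓ + m − 2`; i.e., the dimension
of the Lovász complex `L(G)` is at most `ℓ + m − 3`. -/
theorem lovasz_chain_length_le {V : Type*} [Fintype V] (G : SimpleGraph V)
    (ℓ m : ℕ) (hℓ : 1 ≤ ℓ) (hm : 1 ≤ m) (hG : ¬ ContainsKB G ℓ m)
    (p : ℕ) (hp : 1 ≤ p) (A : Fin p → Set V)
    (hchain : StrictMono A)
    (hne : ∀ i, (A i).Nonempty)
    (hcn_ne : (commonNbhd G (A ⟨p - 1, by omega⟩)).Nonempty)
    (hfix : ∀ i, commonNbhd G (commonNbhd G (A i)) = A i) :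
    p ≤ ℓ + m - 2 := by
  by_contra! hlong
  have hA := Fin.add_sub_le_of_strictMono (Set.ncard_strictMono.comp hchain)
    (show (⟨0, hp⟩ : Fin p) ≤ ⟨ℓ - 1, by omega⟩ from Fin.mk_le_mk.mpr (Nat.zero_le _))
  have hCN := Fin.add_sub_le_of_strictAnti
    (Set.ncard_strictMono.comp_strictAnti (G.strictAnti_commonNbhd_comp hchain hfix))
    (show (⟨ℓ - 1, by omega⟩ : Fin p) ≤ ⟨p - 1, by omega⟩ from Fin.mk_le_mk.mpr (by omega))
  have hA₀ := (Set.ncard_pos (Set.toFinite _)).mpr (hne ⟨0, hp⟩)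
  have hCN₀ := (Set.ncard_pos (Set.toFinite _)).mpr hcn_ne
  simp only [Function.comp_apply] at hA hCN
  exact hG (G.containsKB_of_le_ncard (S := A ⟨ℓ - 1, by omega⟩) (by omega) (by omega))
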